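/- arXiv:0907.4276 — 2 statements merged into one kernel-verified Lean document; each statement's English description precedes it below -/
import Mathlib

section
/- Let (X,r) be a square-free solution with mpl(X,r) ≤ 3 (equivalently, L_{ᵝx} = L_{ᵅx} whenever α, β lie in the same G(X,r)-orbit). Then for each G(X,r)-orbit X_j, the subgroup 𝒢(X_j) of Sym(X) generated by {L_α : α ∈ X_j} is abelian. -/
/-!
For `α, β` in one orbit, the braid relation gives `L_β L_α = L_{ᵝα} L_{β^α}`. The hypothesis
with `x = α` and square-freeness give `L_{ᵝα} = L_α`. As `L_{ᵝα}` sends `β^α` to `β`, the point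
`γ = β^α` lies in the same orbit and `ᵅγ = β`, so the hypothesis with `x = γ` gives
`L_β = L_{ᵅγ} = L_{ᵞγ} = L_γ`. Hence `L_β L_α = L_α L_β`, and a group generated by pairwise
commuting elements is abelian.
-/

namespace YBPaper

variable {X : Type*}

/-- Left translation: `lact r x y = ˣy`. -/
def lact (r : X × X → X × X) (x y : X) : X := (r (x, y)).1

/-- Right translation: `ract r x y = xʸ`. -/
def ract (r : X × X → X × X) (x y : X) : X := (r (x, y)).2

def r12 (r : X × X → X × X) : X × X × X → X × X × X :=
  fun p => ((r (p.1, p.2.1)).1, (r (p.1, p.2.1)).2, p.2.2)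

def r23 (r : X × X → X × X) : X × X × X → X × X × X :=
  fun p => (p.1, r (p.2.1, p.2.2))

/-- A non-degenerate involutive square-free set-theoretic solution of the YBE. -/
structure IsSquareFreeSolution (r : X × X → X × X) : Prop where
  nondegL : ∀ x : X, Function.Bijective fun y => (r (x, y)).1
  nondegR : ∀ y : X, Function.Bijective fun x => (r (x, y)).2
  invol : ∀ p : X × X, r (r p) = p
  sqfree : ∀ x : X, r (x, x) = (x, x)
  braided : ∀ p : X × X × X, r12 r (r23 r (r12 r p)) = r23 r (r12 r (r23 r p))

/-- `relk l k x y` means the images of `x` and `y` in the `k`-th retract coincide. -/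
def relk (l : X → X → X) : ℕ → X → X → Prop
  | 0 => fun x y => x = y
  | (k+1) => fun x y => ∀ z : X, relk l k (l x z) (l y z)

/-- `mplLe l m` : the `m`-th retract is a one-element solution, i.e. `mpl ≤ m`. -/
def mplLe (l : X → X → X) (m : ℕ) : Prop := ∀ x y : X, relk l m x y

/-- `mplEq l m` : the multipermutation level is exactly `m`. -/
def mplEq (l : X → X → X) (m : ℕ) : Prop := mplLe l m ∧ ∀ k < m, ¬ mplLe l k

/-- The set of left translations, as permutations. -/
def lperms (r : X × X → X × X) : Set (Equiv.Perm X) :=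
  {σ : Equiv.Perm X | ∃ x : X, ∀ y : X, σ y = (r (x, y)).1}

/-- The YB permutation group `𝒢(X,r)`, generated by the left translations. -/
def Gcal (r : X × X → X × X) : Subgroup (Equiv.Perm X) := Subgroup.closure (lperms r)

open MulAction

namespace IsSquareFreeSolution

variable {r : X × X → X × X}

theorem lact_self (h : IsSquareFreeSolution r) (x : X) : lact r x x = x := by
  simp [lact, h.sqfree x]

theorem lact_lact_ract (h : IsSquareFreeSolution r) (β α : X) :
    lact r (lact r β α) (ract r β α) = β :=
  congrArg Prod.fst (h.invol (β, α))

theorem lact_lact (h : IsSquareFreeSolution r) (β α z : X) :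
    lact r β (lact r α z) = lact r (lact r β α) (lact r (ract r β α) z) :=
  (congrArg Prod.fst (h.braided (β, α, z))).symm

theorem exists_mem_Gcal_apply_eq_lact (h : IsSquareFreeSolution r) (x : X) :
    ∃ π ∈ Gcal r, ∀ y, π y = lact r x y :=
  ⟨Equiv.ofBijective _ (h.nondegL x), Subgroup.subset_closure ⟨x, fun _ => rfl⟩, fun _ => rfl⟩

theorem ract_mem_orbit (h : IsSquareFreeSolution r) (β α : X) :
    ract r β α ∈ orbit (Gcal r) β := by
  obtain ⟨π, hπ, hπ_apply⟩ := h.exists_mem_Gcal_apply_eq_lact (lact r β α)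
  refine mem_orbit_symm.mp ⟨⟨π, hπ⟩, ?_⟩
  exact (hπ_apply _).trans (h.lact_lact_ract β α)

section MplLeThree

variable (h : IsSquareFreeSolution r)
  (hcond : ∀ α β x : X, β ∈ orbit (Gcal r) α →
    ∀ z : X, lact r (lact r β x) z = lact r (lact r α x) z)
include h hcond

theorem lact_lact_eq_of_mem_orbit {α β : X} (hβ : β ∈ orbit (Gcal r) α) :
    lact r (lact r β α) = lact r α := by
  funext z
  simpa only [h.lact_self] using hcond α β α hβ z

theorem lact_ract_eq_of_mem_orbit {α β : X} (hβ : β ∈ orbit (Gcal r) α) :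
    lact r (ract r β α) = lact r β := by
  have hα : α ∈ orbit (Gcal r) (ract r β α) := by
    rw [orbit_eq_iff.mpr (h.ract_mem_orbit β α)]
    exact mem_orbit_symm.mp hβ
  have hlact_α : lact r α (ract r β α) = β := by
    rw [← h.lact_lact_eq_of_mem_orbit hcond hβ]
    exact h.lact_lact_ract β α
  funext z
  simpa only [hlact_α, h.lact_self] using (hcond (ract r β α) α (ract r β α) hα z).symm

theorem lact_comm_of_mem_orbit {α β : X} (hβ : β ∈ orbit (Gcal r) α) (z : X) :
    lact r α (lact r β z) = lact r β (lact r α z) := by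
  rw [h.lact_lact β α z, h.lact_lact_eq_of_mem_orbit hcond hβ,
    h.lact_ract_eq_of_mem_orbit hcond hβ]

end MplLeThree

end IsSquareFreeSolution

/-- if `L_{ᵝx} = L_{ᵅx}` whenever `α, β` lie in the same
`𝒢(X,r)`-orbit (i.e. `mpl ≤ 3`), then for each orbit the subgroup generated by the
left translations by its elements is abelian. -/
theorem stmt17 {X : Type*} (r : X × X → X × X) (h : IsSquareFreeSolution r)
    (hcond : ∀ α β x : X, β ∈ MulAction.orbit (↥(Gcal r)) α →
        ∀ z : X, lact r (lact r β x) z = lact r (lact r α x) z) :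
    ∀ x0 : X,
      ∀ σ ∈ Subgroup.closure
          {π : Equiv.Perm X | ∃ a ∈ MulAction.orbit (↥(Gcal r)) x0, ∀ y, π y = lact r a y},
      ∀ τ ∈ Subgroup.closure
          {π : Equiv.Perm X | ∃ a ∈ MulAction.orbit (↥(Gcal r)) x0, ∀ y, π y = lact r a y},
        σ * τ = τ * σ := by
  intro x0
  set S := {π : Equiv.Perm X | ∃ a ∈ orbit (Gcal r) x0, ∀ y, π y = lact r a y}
  have hS : ∀ σ ∈ S, ∀ τ ∈ S, σ * τ = τ * σ := by
    rintro σ ⟨α, hα, hσ⟩ τ ⟨β, hβ, hτ⟩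
    have hβα : β ∈ orbit (Gcal r) α := orbit_eq_iff.mpr hα ▸ hβ
    ext z
    simp only [Equiv.Perm.mul_apply, hσ, hτ, h.lact_comm_of_mem_orbit hcond hβα]
  intro σ hσ τ hτ
  exact congrArg Subtype.val
    ((Subgroup.isMulCommutative_closure hS).is_comm.comm ⟨σ, hσ⟩ ⟨τ, hτ⟩)

end YBPaper
end

section
/- Let (X₀, r₀) and (Y, r_Y) be disjoint finite square-free multipermutation solutions with mpl(X₀) = m ≥ 1 and mpl(Y) = n ≥ 1. Then the wreath product solution (Z,r) = (X₀, r₀) ≀ (Y, r_Y) is a multipermutation solution with mpl(Z,r) = m + n − 1. -/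
namespace YBPaper

variable {X : Type*}

/-- The wreath product map on `Z = (Y × X₀) ⊕ Y`, where `(α, x)` represents the copy
`t_{α,x}` of `x ∈ X₀` indexed by `α ∈ Y`:
* within one copy it is the copy of `r₀`; distinct copies act trivially on each other;
* `β ∈ Y` maps `t_{α,x}` to `t_{ᵝα,x}` and is unchanged; elements of copies act
  trivially on `Y` (with the inverse permutation appearing on the right output);
* on `Y` it is `r_Y`. -/
noncomputable def wreathR {X0 Y : Type*} [Nonempty Y] [DecidableEq Y]
    (r0 : X0 × X0 → X0 × X0) (rY : Y × Y → Y × Y) :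
    ((Y × X0) ⊕ Y) × ((Y × X0) ⊕ Y) → ((Y × X0) ⊕ Y) × ((Y × X0) ⊕ Y) :=
  fun p =>
    match p with
    | (Sum.inl (α, x), Sum.inl (α', x')) =>
        if α = α' then
          (Sum.inl (α, (r0 (x, x')).1), Sum.inl (α, (r0 (x, x')).2))
        else (Sum.inl (α', x'), Sum.inl (α, x))
    | (Sum.inr β, Sum.inl (α, x)) => (Sum.inl ((rY (β, α)).1, x), Sum.inr β)
    | (Sum.inl (α, x), Sum.inr β) =>
        (Sum.inr β, Sum.inl (Function.invFun (fun a => (rY (β, a)).1) α, x))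
    | (Sum.inr β, Sum.inr γ) => (Sum.inr (rY (β, γ)).1, Sum.inr (rY (β, γ)).2)


/-!
In a square-free solution, `mpl ≤ k + 1` exactly when every element acts trivially on the
`k`-th retract. An element of a copy `X_α` acts only inside `X_α`, so it acts trivially on the
`(m - 1)`-th retract of `Z`. Two distinct copies of one element of `X₀` are identified at level
`m`, and at no smaller level unless `X₀` collapses there; hence `β ∈ Y`, which permutes the
copies, needs `n - 1` levels to act trivially on `Y` and `m - 1` more to act trivially on the
copies, giving `mpl Z ≤ m + n - 1`. Conversely, elements of `Y` distinguished by `n - 1` levels of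
translations in `Y` send one element of `X₀` to two distinct copies after those `n - 1` steps, so
identifying them at level `m + n - 2` would force `mpl X₀ ≤ m - 1`.
-/

theorem relk_equivalence (l : X → X → X) : ∀ k, Equivalence (relk l k)
  | 0 => eq_equivalence
  | k + 1 =>
    have h := relk_equivalence l k
    ⟨fun _ _ => h.refl _, fun hxy z => h.symm (hxy z), fun hxy hyz z => h.trans (hxy z) (hyz z)⟩

theorem relk_refl (l : X → X → X) (k : ℕ) (x : X) : relk l k x x :=
  (relk_equivalence l k).refl x

theorem relk_succ_of_relk {l : X → X → X} :
    ∀ {k : ℕ} {x y : X}, relk l k x y → relk l (k + 1) x y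
  | 0, _, _, rfl => relk_refl l 1 _
  | _ + 1, _, _, h => fun z => relk_succ_of_relk (h z)

theorem relk_mono {l : X → X → X} {k k' : ℕ} (hk : k ≤ k') {x y : X} (h : relk l k x y) :
    relk l k' x y := by
  induction k', hk using Nat.le_induction with
  | base => exact h
  | succ _ _ ih => exact relk_succ_of_relk ih

theorem mplLe_mono {l : X → X → X} {k k' : ℕ} (hk : k ≤ k') (h : mplLe l k) : mplLe l k' :=
  fun x y => relk_mono hk (h x y)

theorem mplEq_succ_iff {l : X → X → X} {k : ℕ} :
    mplEq l (k + 1) ↔ mplLe l (k + 1) ∧ ¬ mplLe l k :=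
  ⟨fun h => ⟨h.1, h.2 k k.lt_succ_self⟩,
    fun h => ⟨h.1, fun _ hi hle => h.2 (mplLe_mono (Nat.le_of_lt_succ hi) hle)⟩⟩

/-- `a` acts trivially on the `k`-th retract. -/
def ActsTrivially (l : X → X → X) (k : ℕ) (a : X) : Prop := ∀ z, relk l k (l a z) z

theorem ActsTrivially.mono {l : X → X → X} {k k' : ℕ} {a : X} (hk : k ≤ k')
    (h : ActsTrivially l k a) : ActsTrivially l k' a :=
  fun z => relk_mono hk (h z)

theorem relk_succ_of_actsTrivially {l : X → X → X} {k : ℕ} {a b : X}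
    (ha : ActsTrivially l k a) (hb : ActsTrivially l k b) : relk l (k + 1) a b :=
  fun z => (relk_equivalence l k).trans (ha z) ((relk_equivalence l k).symm (hb z))

theorem mplLe_succ_of_forall_actsTrivially {l : X → X → X} {k : ℕ}
    (h : ∀ a, ActsTrivially l k a) : mplLe l (k + 1) :=
  fun a b => relk_succ_of_actsTrivially (h a) (h b)

theorem actsTrivially_of_mplLe_succ {l : X → X → X} (hsq : ∀ a, l a a = a) {k : ℕ}
    (h : mplLe l (k + 1)) (a : X) : ActsTrivially l k a := fun z => by
  simpa only [hsq] using h a z z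

theorem IsSquareFreeSolution.lact_self_s19 {r : X × X → X × X} (hr : IsSquareFreeSolution r)
    (x : X) : lact r x x = x := by
  rw [lact, hr.sqfree]

section Wreath

variable {X0 Y : Type*} [Nonempty Y] [DecidableEq Y]
  {r0 : X0 × X0 → X0 × X0} {rY : Y × Y → Y × Y}

local notation "W" => lact (wreathR r0 rY)

@[simp]
theorem lact_wreathR_inl_inl_self (α : Y) (x x' : X0) :
    W (.inl (α, x)) (.inl (α, x')) = .inl (α, lact r0 x x') := by
  simp [lact, wreathR]

@[simp]
theorem lact_wreathR_inl_inl_of_ne {α α' : Y} (h : α ≠ α') (x x' : X0) :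
    W (.inl (α, x)) (.inl (α', x')) = .inl (α', x') := by
  simp [lact, wreathR, h]

@[simp]
theorem lact_wreathR_inl_inr (α : Y) (x : X0) (β : Y) :
    W (.inl (α, x)) (.inr β) = .inr β := rfl

@[simp]
theorem lact_wreathR_inr_inl (β α : Y) (x : X0) :
    W (.inr β) (.inl (α, x)) = .inl (lact rY β α, x) := rfl

@[simp]
theorem lact_wreathR_inr_inr (β γ : Y) :
    W (.inr β) (.inr γ) = .inr (lact rY β γ) := rfl

theorem relk_wreathR_inl_inl_self_iff {k : ℕ} (α : Y) (x x' : X0) :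
    relk W k (.inl (α, x)) (.inl (α, x')) ↔ relk (lact r0) k x x' := by
  induction k generalizing x x' with
  | zero => simp [relk]
  | succ k ih =>
    refine ⟨fun h z => ?_, fun h z => ?_⟩
    · simpa [ih] using h (.inl (α, z))
    · rcases z with ⟨α', z⟩ | β
      · by_cases hα : α = α'
        · subst hα
          simpa [ih] using h z
        · simpa [hα] using relk_refl _ k _
      · exact relk_refl _ k _

theorem actsTrivially_wreathR_inl {k : ℕ} {x : X0} (hx : ActsTrivially (lact r0) k x)
    (α : Y) : ActsTrivially W k (.inl (α, x)) := by
  rintro (⟨α', z⟩ | β)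
  · by_cases hα : α = α'
    · subst hα
      simpa [relk_wreathR_inl_inl_self_iff] using hx z
    · simpa [hα] using relk_refl _ k _
  · exact relk_refl _ k _

section UpperBound

variable {k : ℕ} (hX : ∀ x, ActsTrivially (lact r0) k x)
include hX

theorem relk_wreathR_inl_inl {K : ℕ} (hK : k < K) (α α' : Y) (x x' : X0) :
    relk W K (.inl (α, x)) (.inl (α', x')) :=
  relk_mono hK (relk_succ_of_actsTrivially
    (actsTrivially_wreathR_inl (hX x) α) (actsTrivially_wreathR_inl (hX x') α'))

theorem relk_wreathR_inr_inr {j K : ℕ} {γ δ : Y} (h : relk (lact rY) j γ δ)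
    (hK : j + k ≤ K) : relk W K (.inr γ) (.inr δ) := by
  induction j generalizing K γ δ with
  | zero =>
    rw [show γ = δ from h]
    exact relk_refl _ K _
  | succ j ih =>
    obtain ⟨K, rfl⟩ : ∃ K', K = K' + 1 := ⟨K - 1, by omega⟩
    rintro (⟨α, x⟩ | ε)
    · rcases j with _ | j
      · have hα : lact rY γ α = lact rY δ α := h α
        rw [lact_wreathR_inr_inl, lact_wreathR_inr_inl, hα]
        exact relk_refl _ K _
      · exact relk_wreathR_inl_inl hX (by omega) _ _ x x
    · exact ih (h ε) (by omega)

theorem actsTrivially_wreathR_inr {j : ℕ} (hY : ∀ β, ActsTrivially (lact rY) j β) (β : Y) :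
    ActsTrivially W (k + j) (.inr β) := by
  rintro (⟨α, x⟩ | γ)
  · rw [lact_wreathR_inr_inl]
    rcases j with _ | j
    · rw [show lact rY β α = α from hY β α]
      exact relk_refl _ _ _
    · exact relk_wreathR_inl_inl hX (by omega) _ _ x x
  · exact relk_wreathR_inr_inr hX (hY β γ) (by omega)

theorem actsTrivially_wreathR {j : ℕ} (hY : ∀ β, ActsTrivially (lact rY) j β) :
    ∀ z, ActsTrivially W (k + j) z
  | .inl (α, x) => (actsTrivially_wreathR_inl (hX x) α).mono (Nat.le_add_right k j)
  | .inr β => actsTrivially_wreathR_inr hX hY β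

end UpperBound

theorem actsTrivially_of_relk_wreathR_inl_inl {k : ℕ} {α α' : Y} (hα : α ≠ α') {x x' : X0}
    (h : relk W (k + 1) (.inl (α, x)) (.inl (α', x'))) : ActsTrivially (lact r0) k x :=
  fun z => by simpa [Ne.symm hα, relk_wreathR_inl_inl_self_iff] using h (.inl (α, z))

theorem mplLe_of_relk_wreathR_inl_inl {K : ℕ} {α α' : Y} (hα : α ≠ α')
    (h : ∀ x : X0, relk W K (.inl (α, x)) (.inl (α', x))) : mplLe (lact r0) K := by
  cases K with
  | zero => exact fun x _ => absurd (congrArg Prod.fst (Sum.inl.inj (h x))) hα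
  | succ K =>
    exact mplLe_succ_of_forall_actsTrivially fun x =>
      actsTrivially_of_relk_wreathR_inl_inl hα (h x)

theorem mplLe_of_relk_wreathR_inr_inr {K j : ℕ} {γ δ : Y}
    (hγδ : ¬ relk (lact rY) (j + 1) γ δ) (h : relk W (K + j + 1) (.inr γ) (.inr δ)) :
    mplLe (lact r0) K := by
  induction j generalizing γ δ with
  | zero =>
    obtain ⟨α, hα⟩ := not_forall.mp hγδ
    exact mplLe_of_relk_wreathR_inl_inl hα fun x => by simpa using h (.inl (α, x))
  | succ j ih =>
    obtain ⟨ε, hε⟩ := not_forall.mp hγδ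
    exact ih hε (h (.inr ε))

theorem not_mplLe_wreathR {k j : ℕ} (hX : ¬ mplLe (lact r0) k) (hY : ¬ mplLe (lact rY) j) :
    ¬ mplLe W (k + j) := by
  intro hW
  rcases j with _ | j
  · exact hX fun x x' => (relk_wreathR_inl_inl_self_iff (Classical.arbitrary Y) x x').1 (hW _ _)
  · obtain ⟨γ, δ, hγδ⟩ : ∃ γ δ, ¬ relk (lact rY) (j + 1) γ δ := by
      simpa [mplLe] using hY
    exact hX (mplLe_of_relk_wreathR_inr_inr hγδ (hW _ _))

end Wreath

theorem stmt19_general {X0 Y : Type*} [Nonempty Y] [DecidableEq Y]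
    (r0 : X0 × X0 → X0 × X0) (rY : Y × Y → Y × Y)
    (h0 : IsSquareFreeSolution r0) (hY : IsSquareFreeSolution rY)
    (m n : ℕ) (hm : 1 ≤ m) (hn : 1 ≤ n)
    (hm0 : mplEq (lact r0) m) (hnY : mplEq (lact rY) n) :
    mplEq (lact (wreathR r0 rY)) (m + n - 1) := by
  obtain ⟨k, rfl⟩ : ∃ k, m = k + 1 := ⟨m - 1, by omega⟩
  obtain ⟨j, rfl⟩ : ∃ j, n = j + 1 := ⟨n - 1, by omega⟩
  rw [mplEq_succ_iff] at hm0 hnY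
  rw [show k + 1 + (j + 1) - 1 = k + j + 1 by omega, mplEq_succ_iff]
  exact ⟨mplLe_succ_of_forall_actsTrivially <| actsTrivially_wreathR
      (actsTrivially_of_mplLe_succ h0.lact_self_s19 hm0.1)
      (actsTrivially_of_mplLe_succ hY.lact_self_s19 hnY.1),
    not_mplLe_wreathR hm0.2 hnY.2⟩

/-- the wreath product of finite square-free multipermutation solutions
of levels `m ≥ 1` and `n ≥ 1` has multipermutation level exactly `m + n - 1`. -/
theorem stmt19 {X0 Y : Type*} [Finite X0] [Finite Y] [Nonempty Y] [DecidableEq Y]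
    (r0 : X0 × X0 → X0 × X0) (rY : Y × Y → Y × Y)
    (h0 : IsSquareFreeSolution r0) (hY : IsSquareFreeSolution rY)
    (m n : ℕ) (hm : 1 ≤ m) (hn : 1 ≤ n)
    (hm0 : mplEq (lact r0) m) (hnY : mplEq (lact rY) n) :
    mplEq (lact (wreathR r0 rY)) (m + n - 1) :=
  stmt19_general r0 rY h0 hY m n hm hn hm0 hnY

end YBPaper
end
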